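/- arXiv:2504.10710 — 6 statements merged into one kernel-verified Lean document; each statement's English description precedes it below -/
import Mathlib

section
/- Let M = [[A, B], [C, D]] be a real block matrix with A invertible and the Schur complement D − C·A⁻¹·B invertible. Then M is invertible and M⁻¹ = [[A⁻¹, 0], [0, 0]] + col(−A⁻¹B; I) · (D − C·A⁻¹·B)⁻¹ · row(−(A⁻¹B)ᵀ, I) · (I − M·[[A⁻¹, 0], [0, 0]]), where col(−A⁻¹B; I) denotes the (n₁+n₂)×n₂ matrix with top block −A⁻¹B and bottom block the n₂×n₂ identity, and row(−(A⁻¹B)ᵀ, I) denotes the n₂×(n₁+n₂) matrix with left block −(A⁻¹B)ᵀ and right block the n₂×n₂ identity. -/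
/-!
With `S = D - C A⁻¹ B`, the Schur-complement inverse
`M⁻¹ = [[A⁻¹ + A⁻¹ B S⁻¹ C A⁻¹, -A⁻¹ B S⁻¹], [-S⁻¹ C A⁻¹, S⁻¹]]` splits as
`[[A⁻¹, 0], [0, 0]] + col(-A⁻¹B; I) · S⁻¹ · row(-C A⁻¹, I)`. Since
`I - M · [[A⁻¹, 0], [0, 0]] = [[0, 0], [-C A⁻¹, I]]` has zero top row, multiplying it on the left
by `row(X, I)` gives `row(-C A⁻¹, I)` whatever `X` is, in particular for `X = -(A⁻¹B)ᵀ`.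
-/

open Matrix

namespace Matrix

variable {m n α : Type*} [Fintype m] [Fintype n] [DecidableEq m] [DecidableEq n]

theorem one_sub_fromBlocks_mul_fromBlocks_zero [Ring α] {A A' : Matrix m m α} (B : Matrix m n α)
    (C : Matrix n m α) (D : Matrix n n α) (hA : A * A' = 1) :
    1 - fromBlocks A B C D * fromBlocks A' 0 0 0 = fromBlocks 0 0 (-(C * A')) 1 := by
  rw [fromBlocks_multiply, hA, ← fromBlocks_one, sub_eq_add_neg, fromBlocks_neg,
    fromBlocks_add]
  simp

variable [CommRing α] {A : Matrix m m α} {B : Matrix m n α} {C : Matrix n m α} {D : Matrix n n α}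

theorem isUnit_fromBlocks_of_isUnit₁₁ (hA : IsUnit A) (hS : IsUnit (D - C * A⁻¹ * B)) :
    IsUnit (fromBlocks A B C D) := by
  obtain ⟨_⟩ := hA.nonempty_invertible
  rwa [isUnit_fromBlocks_iff_of_invertible₁₁, invOf_eq_nonsing_inv]

theorem inv_fromBlocks_of_isUnit₁₁ (hA : IsUnit A) (hS : IsUnit (D - C * A⁻¹ * B)) :
    (fromBlocks A B C D)⁻¹ =
      fromBlocks (A⁻¹ + A⁻¹ * B * (D - C * A⁻¹ * B)⁻¹ * C * A⁻¹)
        (-(A⁻¹ * B * (D - C * A⁻¹ * B)⁻¹)) (-((D - C * A⁻¹ * B)⁻¹ * C * A⁻¹))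
        (D - C * A⁻¹ * B)⁻¹ := by
  obtain ⟨_⟩ := hA.nonempty_invertible
  obtain ⟨_⟩ := hS.nonempty_invertible
  have : Invertible (D - C * ⅟A * B) := by rwa [invOf_eq_nonsing_inv]
  let := fromBlocks₁₁Invertible A B C D
  simp_rw [← invOf_eq_nonsing_inv, invOf_fromBlocks₁₁_eq]

theorem inv_fromBlocks_eq_add_fromRows_mul_fromCols (hA : IsUnit A)
    (hS : IsUnit (D - C * A⁻¹ * B)) :
    (fromBlocks A B C D)⁻¹ = fromBlocks A⁻¹ 0 0 0 +
      fromRows (-(A⁻¹ * B)) 1 * (D - C * A⁻¹ * B)⁻¹ * fromCols (-(C * A⁻¹)) 1 := by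
  rw [inv_fromBlocks_of_isUnit₁₁ hA hS, fromRows_mul, fromRows_mul_fromCols, fromBlocks_add]
  simp [Matrix.mul_assoc]

end Matrix

/-- **Block matrix inversion formula.**
Let `M = [[A, B], [C, D]]` be a real block matrix with `A` invertible and the Schur
complement `D - C·A⁻¹·B` invertible.  Then `M` is invertible and
`M⁻¹ = [[A⁻¹,0],[0,0]] + col(-A⁻¹B; I) · (D - C·A⁻¹·B)⁻¹ · row(-(A⁻¹B)ᵀ, I) · (I - M·[[A⁻¹,0],[0,0]])`. -/
theorem block_inverse_formula {n₁ n₂ : ℕ}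
    (A : Matrix (Fin n₁) (Fin n₁) ℝ) (B : Matrix (Fin n₁) (Fin n₂) ℝ)
    (C : Matrix (Fin n₂) (Fin n₁) ℝ) (D : Matrix (Fin n₂) (Fin n₂) ℝ)
    (hA : IsUnit A) (hS : IsUnit (D - C * A⁻¹ * B)) :
    IsUnit (Matrix.fromBlocks A B C D) ∧
    (Matrix.fromBlocks A B C D)⁻¹ =
      Matrix.fromBlocks A⁻¹ 0 0 0 +
      Matrix.fromRows (-(A⁻¹ * B)) (1 : Matrix (Fin n₂) (Fin n₂) ℝ) *
        (D - C * A⁻¹ * B)⁻¹ *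
        Matrix.fromCols (-((A⁻¹ * B)ᵀ)) (1 : Matrix (Fin n₂) (Fin n₂) ℝ) *
        ((1 : Matrix (Fin n₁ ⊕ Fin n₂) (Fin n₁ ⊕ Fin n₂) ℝ) -
          Matrix.fromBlocks A B C D * Matrix.fromBlocks A⁻¹ 0 0 0) := by
  have hAA : A * A⁻¹ = 1 := mul_nonsing_inv A ((isUnit_iff_isUnit_det A).mp hA)
  refine ⟨isUnit_fromBlocks_of_isUnit₁₁ hA hS, ?_⟩
  rw [inv_fromBlocks_eq_add_fromRows_mul_fromCols hA hS,
    one_sub_fromBlocks_mul_fromBlocks_zero B C D hAA, Matrix.mul_assoc _ (fromCols _ _),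
    fromCols_mul_fromBlocks]
  simp
end

section
/- Let M be an n×n block-tridiagonal matrix of m×m real blocks and let σ be the odd–even permutation of the block indices. Then the permuted matrix M' with blocks M'_{k,l} = M_{σ(k),σ(l)} has 2×2 block-of-blocks structure [[A, B], [C, D]] in which: A is block diagonal with diagonal blocks A₁, A₃, A₅, … (the odd diagonal blocks of M); D is block diagonal with diagonal blocks A₂, A₄, A₆, … (the even diagonal blocks of M); the block in row k, column l of B is U_{2k−1} if l = k, L_{2k−1} if l = k−1, and 0 otherwise; and the block in row k, column l of C is L_{2k} if l = k, U_{2k} if l = k+1, and 0 otherwise. -/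
open Matrix

/-- The odd (1-based) block indices of an `n`-block matrix, 0-based: position `k`
corresponds to original 0-based index `2k` (1-based index `2k+1`, odd). -/
def oddEmb (n : ℕ) (k : Fin ((n + 1) / 2)) : Fin n :=
  ⟨2 * k, by have := k.2; omega⟩

/-- The even (1-based) block indices: position `k` corresponds to original 0-based
index `2k+1` (1-based index `2k+2`, even). -/
def evenEmb (n : ℕ) (k : Fin (n / 2)) : Fin n :=
  ⟨2 * k + 1, by have := k.2; omega⟩

/-- **Odd–even reordering of a block-tridiagonal matrix.**
Let `M` be an `n×n` block-tridiagonal matrix of `m×m` real blocks (diagonal blocks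
`Aᵢ`, superdiagonal blocks `Uᵢ`, subdiagonal blocks `Lᵢ`) and `σ` the odd–even
permutation of the block indices.  Then the permuted matrix `M'_{k,l} = M_{σ(k),σ(l)}`
has the `2×2` block-of-blocks structure `[[A, B], [C, D]]` where `A` (resp. `D`) is
block diagonal with the odd (resp. even) diagonal blocks of `M`, the block of `B` in
row `k`, column `l` is `U_{2k-1}` if `l = k`, `L_{2k-1}` if `l = k-1`, `0` otherwise,
and the block of `C` in row `k`, column `l` is `L_{2k}` if `l = k`, `U_{2k}` if
`l = k+1`, `0` otherwise (1-based indexing). -/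
theorem odd_even_reordered_block_tridiagonal (m n : ℕ)
    (M : Matrix (Fin n) (Fin n) (Matrix (Fin m) (Fin m) ℝ))
    (htri : ∀ i j : Fin n, ((i : ℕ) + 1 < (j : ℕ) ∨ (j : ℕ) + 1 < (i : ℕ)) → M i j = 0) :
    M.submatrix (Sum.elim (oddEmb n) (evenEmb n)) (Sum.elim (oddEmb n) (evenEmb n)) =
      Matrix.fromBlocks
        -- A : block diagonal with the odd diagonal blocks A₁, A₃, A₅, …
        (Matrix.of fun (k l : Fin ((n + 1) / 2)) => if k = l then M (oddEmb n k) (oddEmb n l) else 0)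
        -- B : U_{2k-1} if l = k, L_{2k-1} if l = k-1, 0 otherwise
        (Matrix.of fun (k : Fin ((n + 1) / 2)) (l : Fin (n / 2)) =>
          if (l : ℕ) = (k : ℕ) then M (oddEmb n k) (evenEmb n l)
          else if (l : ℕ) + 1 = (k : ℕ) then M (oddEmb n k) (evenEmb n l)
          else 0)
        -- C : L_{2k} if l = k, U_{2k} if l = k+1, 0 otherwise
        (Matrix.of fun (k : Fin (n / 2)) (l : Fin ((n + 1) / 2)) =>
          if (l : ℕ) = (k : ℕ) then M (evenEmb n k) (oddEmb n l)
          else if (l : ℕ) = (k : ℕ) + 1 then M (evenEmb n k) (oddEmb n l)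
          else 0)
        -- D : block diagonal with the even diagonal blocks A₂, A₄, A₆, …
        (Matrix.of fun (k l : Fin (n / 2)) => if k = l then M (evenEmb n k) (evenEmb n l) else 0) := by
  ext i j
  cases i <;> cases j <;>
    simp only [Matrix.submatrix_apply, Sum.elim_inl, Sum.elim_inr,
      Matrix.fromBlocks_apply₁₁, Matrix.fromBlocks_apply₁₂,
      Matrix.fromBlocks_apply₂₁, Matrix.fromBlocks_apply₂₂, Matrix.of_apply] <;>
    rename_i a b <;>
    split_ifs with h1 h2 <;>
    first
      | rfl
      | (subst h1; rfl)
      | (have hab : (a : ℕ) ≠ (b : ℕ) := fun h => h1 (Fin.ext h);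
         exact congrFun (congrFun (htri _ _ (by simp only [oddEmb, evenEmb]; omega)) _) _)
      | (exact congrFun (congrFun (htri _ _ (by simp only [oddEmb, evenEmb]; omega)) _) _)
end

section
/- Let M be an n×n block-tridiagonal matrix of m×m real blocks, let σ be the odd–even permutation, and write the permuted matrix as [[A, B], [C, D]] with A the block diagonal of the odd diagonal blocks of M. Assume every odd diagonal block A₁, A₃, A₅, … is invertible. Then A⁻¹·B is block lower bidiagonal: its block in row k, column l equals A_{2k−1}⁻¹·U_{2k−1} if l = k, equals A_{2k−1}⁻¹·L_{2k−1} if l = k−1, and is 0 otherwise. -/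
open Matrix

/-- The `m×m` block of a flattened `n×n` block matrix at block position `(i, j)`. -/
def blk {n m : ℕ} (M : Matrix (Fin n × Fin m) (Fin n × Fin m) ℝ) (i j : Fin n) :
    Matrix (Fin m) (Fin m) ℝ :=
  Matrix.of fun a b => M (i, a) (j, b)

/-- **`A⁻¹·B` is block lower bidiagonal.**
Let `M` be an `n×n` block-tridiagonal matrix of `m×m` real blocks with every odd
diagonal block invertible, and let `[[A, B], [C, D]]` be its odd–even reordering
(`A` = odd rows/columns, `B` = odd rows, even columns).  Then the block of `A⁻¹·B`
in row `k`, column `l` equals `A_{2k-1}⁻¹·U_{2k-1}` if `l = k`,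
`A_{2k-1}⁻¹·L_{2k-1}` if `l = k-1`, and `0` otherwise (1-based indexing). -/
theorem odd_block_inverse_mul_B_bidiagonal (m n : ℕ)
    (M : Matrix (Fin n × Fin m) (Fin n × Fin m) ℝ)
    (htri : ∀ i j : Fin n, ((i : ℕ) + 1 < (j : ℕ) ∨ (j : ℕ) + 1 < (i : ℕ)) →
      ∀ a b : Fin m, M (i, a) (j, b) = 0)
    (hodd : ∀ k : Fin ((n + 1) / 2), IsUnit (blk M (oddEmb n k) (oddEmb n k))) :
    ∀ (k : Fin ((n + 1) / 2)) (l : Fin (n / 2)) (a b : Fin m),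
      ((M.submatrix (fun p : Fin ((n + 1) / 2) × Fin m => (oddEmb n p.1, p.2))
                    (fun p : Fin ((n + 1) / 2) × Fin m => (oddEmb n p.1, p.2)))⁻¹ *
        M.submatrix (fun p : Fin ((n + 1) / 2) × Fin m => (oddEmb n p.1, p.2))
                    (fun p : Fin (n / 2) × Fin m => (evenEmb n p.1, p.2)))
        (k, a) (l, b) =
        if (l : ℕ) = (k : ℕ) then
          ((blk M (oddEmb n k) (oddEmb n k))⁻¹ * blk M (oddEmb n k) (evenEmb n l)) a b
        else if (l : ℕ) + 1 = (k : ℕ) then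
          ((blk M (oddEmb n k) (oddEmb n k))⁻¹ * blk M (oddEmb n k) (evenEmb n l)) a b
        else 0 := by
  classical
  set A' := M.submatrix (fun p : Fin ((n + 1) / 2) × Fin m => (oddEmb n p.1, p.2))
      (fun p : Fin ((n + 1) / 2) × Fin m => (oddEmb n p.1, p.2)) with hA'
  set D : Matrix (Fin ((n + 1) / 2) × Fin m) (Fin ((n + 1) / 2) × Fin m) ℝ :=
    Matrix.of fun p q =>
      if p.1 = q.1 then (blk M (oddEmb n p.1) (oddEmb n p.1))⁻¹ p.2 q.2 else 0 with hD
  have hblk : ∀ k, (blk M (oddEmb n k) (oddEmb n k)) *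
      (blk M (oddEmb n k) (oddEmb n k))⁻¹ = 1 := fun k =>
    Matrix.mul_nonsing_inv _ ((Matrix.isUnit_iff_isUnit_det _).mp (hodd k))
  have hAzero : ∀ (k j : Fin ((n + 1) / 2)) (a c : Fin m), k ≠ j →
      A' (k, a) (j, c) = 0 := by
    intro k j a c hkj
    have hkj' : (k : ℕ) ≠ (j : ℕ) := fun h => hkj (Fin.ext h)
    exact htri _ _ (by simp only [oddEmb]; omega) a c
  have hAD : A' * D = 1 := by
    ext ⟨k, a⟩ ⟨l, b⟩
    rw [Matrix.mul_apply, Fintype.sum_prod_type]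
    rw [Finset.sum_eq_single l]
    · by_cases hkl : k = l
      · subst hkl
        have : ∀ c, A' (k, a) (k, c) = blk M (oddEmb n k) (oddEmb n k) a c := by
          intro c; simp [hA', blk, Matrix.submatrix_apply]
        simp only [hD, Matrix.of_apply, if_pos rfl]
        calc (∑ c, A' (k, a) (k, c) * (blk M (oddEmb n k) (oddEmb n k))⁻¹ c b)
            = (blk M (oddEmb n k) (oddEmb n k) *
                (blk M (oddEmb n k) (oddEmb n k))⁻¹) a b := by
              rw [Matrix.mul_apply]; exact Finset.sum_congr rfl fun c _ => by rw [this c]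
          _ = (1 : Matrix (Fin m) (Fin m) ℝ) a b := by rw [hblk k]
          _ = _ := by
              rw [Matrix.one_apply, Matrix.one_apply]
              by_cases hab : a = b
              · subst hab; simp
              · rw [if_neg hab, if_neg (by simp [hab])]
      · have h0 : ∀ c, A' (k, a) (l, c) = 0 := fun c => hAzero k l a c hkl
        simp [h0, Matrix.one_apply, Prod.ext_iff, hkl]
    · intro j _ hj
      have : ∀ c, D (j, c) (l, b) = 0 := by
        intro c; simp [hD, hj]
      simp [this]
    · intro h; exact absurd (Finset.mem_univ l) h
  have hinv : A'⁻¹ = D := Matrix.inv_eq_right_inv hAD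
  intro k l a b
  rw [hinv, Matrix.mul_apply, Fintype.sum_prod_type]
  rw [Finset.sum_eq_single k]
  · have hDk : ∀ c, D (k, a) (k, c) = (blk M (oddEmb n k) (oddEmb n k))⁻¹ a c := by
      intro c; simp [hD]
    by_cases h1 : (l : ℕ) = (k : ℕ)
    · rw [if_pos h1, Matrix.mul_apply]
      exact Finset.sum_congr rfl fun c _ => by rw [hDk c]; rfl
    · by_cases h2 : (l : ℕ) + 1 = (k : ℕ)
      · rw [if_neg h1, if_pos h2, Matrix.mul_apply]
        exact Finset.sum_congr rfl fun c _ => by rw [hDk c]; rfl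
      · rw [if_neg h1, if_neg h2]
        have hz : ∀ c : Fin m,
            M (oddEmb n k, c) (evenEmb n l, b) = 0 := by
          intro c
          exact htri _ _ (by simp only [oddEmb, evenEmb]; omega) c b
        refine Finset.sum_eq_zero fun c _ => ?_
        simp [Matrix.submatrix_apply, hz c]
  · intro j _ hj
    have : ∀ c, D (k, a) (j, c) = 0 := by
      intro c; simp [hD, Ne.symm hj]
    simp [this]
  · intro h; exact absurd (Finset.mem_univ k) h
end

section
/- Let M be an n×n block-tridiagonal matrix of m×m real blocks, let σ be the odd–even permutation, and write the permuted matrix as [[A, B], [C, D]]. Assume every odd diagonal block of M is invertible. Then the Schur complement D − C·A⁻¹·B is block tridiagonal in the even block indices i = 2, 4, 6, …: its diagonal block at even index i equals A_i − L_i·A_{i−1}⁻¹·U_{i−1} − U_i·A_{i+1}⁻¹·L_{i+1} (terms involving indices outside 1,…,n are omitted), its subdiagonal block coupling even index i to even index i−2 equals −L_i·A_{i−1}⁻¹·L_{i−1}, its superdiagonal block coupling even index i to even index i+2 equals −U_i·A_{i+1}⁻¹·U_{i+1}, and all other blocks vanish. -/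
open Matrix

/-- The odd original index `2k+1` (1-based) just below the even index `2k+2`. -/
def evenPrev (n : ℕ) (k : Fin (n / 2)) : Fin n :=
  ⟨2 * k, by have := k.2; omega⟩

lemma ainv_eq (m n : ℕ) (M : Matrix (Fin n × Fin m) (Fin n × Fin m) ℝ)
    (htri : ∀ i j : Fin n, ((i : ℕ) + 1 < (j : ℕ) ∨ (j : ℕ) + 1 < (i : ℕ)) →
      ∀ a b : Fin m, M (i, a) (j, b) = 0)
    (hodd : ∀ k : Fin ((n + 1) / 2), IsUnit (blk M (oddEmb n k) (oddEmb n k))) :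
    (M.submatrix (fun p : Fin ((n + 1) / 2) × Fin m => (oddEmb n p.1, p.2))
                 (fun p : Fin ((n + 1) / 2) × Fin m => (oddEmb n p.1, p.2)))⁻¹ =
    Matrix.of (fun x y : Fin ((n + 1) / 2) × Fin m =>
      if x.1 = y.1 then (blk M (oddEmb n x.1) (oddEmb n x.1))⁻¹ x.2 y.2 else 0) := by
  apply Matrix.inv_eq_right_inv
  ext ⟨i, a⟩ ⟨j, b⟩
  rw [Matrix.mul_apply, Fintype.sum_prod_type]
  simp only [Matrix.submatrix_apply, Matrix.of_apply]
  rw [Finset.sum_eq_single j]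
  · simp only [if_pos rfl]
    by_cases hij : i = j
    · subst hij
      have h1 : blk M (oddEmb n i) (oddEmb n i) * (blk M (oddEmb n i) (oddEmb n i))⁻¹ = 1 :=
        Matrix.mul_nonsing_inv _ ((Matrix.isUnit_iff_isUnit_det _).mp (hodd i))
      have h2 := congrFun (congrFun h1 a) b
      rw [Matrix.mul_apply] at h2
      simp only [if_true]
      simp only [blk, Matrix.of_apply] at h2 ⊢
      rw [h2, Matrix.one_apply, Matrix.one_apply]
      simp [Prod.ext_iff]
    · have hz : ∀ c, M (oddEmb n i, a) (oddEmb n j, c) = 0 := by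
        intro c
        apply htri
        have : (i : ℕ) ≠ j := fun hv => hij (Fin.ext hv)
        simp only [oddEmb]
        omega
      simp only [hz, zero_mul, Finset.sum_const_zero]
      rw [Matrix.one_apply, if_neg (by simp [Prod.ext_iff, hij])]
  · intro p _ hp
    simp only [if_neg hp, mul_zero, Finset.sum_const_zero]
  · intro h; exact absurd (Finset.mem_univ j) h

lemma collapse (m n : ℕ) (M : Matrix (Fin n × Fin m) (Fin n × Fin m) ℝ)
    (k l : Fin (n / 2)) (a b : Fin m) :
    (M.submatrix (fun p : Fin (n / 2) × Fin m => (evenEmb n p.1, p.2))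
                    (fun p : Fin ((n + 1) / 2) × Fin m => (oddEmb n p.1, p.2)) *
        Matrix.of (fun x y : Fin ((n + 1) / 2) × Fin m =>
          if x.1 = y.1 then (blk M (oddEmb n x.1) (oddEmb n x.1))⁻¹ x.2 y.2 else 0) *
        M.submatrix (fun p : Fin ((n + 1) / 2) × Fin m => (oddEmb n p.1, p.2))
                    (fun p : Fin (n / 2) × Fin m => (evenEmb n p.1, p.2))) ((k, a)) ((l, b)) =
    ∑ p : Fin ((n + 1) / 2),
      (blk M (evenEmb n k) (oddEmb n p) * (blk M (oddEmb n p) (oddEmb n p))⁻¹ *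
        blk M (oddEmb n p) (evenEmb n l)) a b := by
  rw [Matrix.mul_apply, Fintype.sum_prod_type]
  congr 1
  ext p
  simp only [Matrix.mul_apply, Fintype.sum_prod_type, Matrix.submatrix_apply, Matrix.of_apply]
  congr 1
  ext c
  congr 1
  rw [Finset.sum_eq_single p]
  · simp only [if_pos rfl, blk, Matrix.of_apply, if_true]
  · intro q _ hq
    simp [if_neg hq]
  · intro h; exact absurd (Finset.mem_univ p) h

/-- **The Schur complement of the odd–even reordered block-tridiagonal matrix is block
tridiagonal in the even indices.**  With `[[A, B], [C, D]]` the odd–even reordering of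
a block-tridiagonal `M` whose odd diagonal blocks are invertible, the Schur complement
`D - C·A⁻¹·B` has, at even (1-based) index `i`: diagonal block
`Aᵢ - Lᵢ·A_{i-1}⁻¹·U_{i-1} - Uᵢ·A_{i+1}⁻¹·L_{i+1}` (terms with out-of-range indices
omitted), subdiagonal block (coupling `i` to `i-2`) `-Lᵢ·A_{i-1}⁻¹·L_{i-1}`,
superdiagonal block (coupling `i` to `i+2`) `-Uᵢ·A_{i+1}⁻¹·U_{i+1}`, and zero blocks
elsewhere. -/
theorem schur_complement_block_tridiagonal (m n : ℕ)
    (M : Matrix (Fin n × Fin m) (Fin n × Fin m) ℝ)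
    (htri : ∀ i j : Fin n, ((i : ℕ) + 1 < (j : ℕ) ∨ (j : ℕ) + 1 < (i : ℕ)) →
      ∀ a b : Fin m, M (i, a) (j, b) = 0)
    (hodd : ∀ k : Fin ((n + 1) / 2), IsUnit (blk M (oddEmb n k) (oddEmb n k))) :
    ∀ (k l : Fin (n / 2)) (a b : Fin m),
      (M.submatrix (fun p : Fin (n / 2) × Fin m => (evenEmb n p.1, p.2))
                   (fun p : Fin (n / 2) × Fin m => (evenEmb n p.1, p.2)) -
        M.submatrix (fun p : Fin (n / 2) × Fin m => (evenEmb n p.1, p.2))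
                    (fun p : Fin ((n + 1) / 2) × Fin m => (oddEmb n p.1, p.2)) *
        (M.submatrix (fun p : Fin ((n + 1) / 2) × Fin m => (oddEmb n p.1, p.2))
                     (fun p : Fin ((n + 1) / 2) × Fin m => (oddEmb n p.1, p.2)))⁻¹ *
        M.submatrix (fun p : Fin ((n + 1) / 2) × Fin m => (oddEmb n p.1, p.2))
                    (fun p : Fin (n / 2) × Fin m => (evenEmb n p.1, p.2)))
        (k, a) (l, b) =
      if (l : ℕ) = (k : ℕ) then
        (blk M (evenEmb n k) (evenEmb n k)
          - blk M (evenEmb n k) (evenPrev n k) * (blk M (evenPrev n k) (evenPrev n k))⁻¹ *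
              blk M (evenPrev n k) (evenEmb n k)
          - (if h : 2 * (k : ℕ) + 2 < n then
              blk M (evenEmb n k) ⟨2 * (k : ℕ) + 2, h⟩ *
                (blk M ⟨2 * (k : ℕ) + 2, h⟩ ⟨2 * (k : ℕ) + 2, h⟩)⁻¹ *
                blk M ⟨2 * (k : ℕ) + 2, h⟩ (evenEmb n k)
            else 0)) a b
      else if (l : ℕ) + 1 = (k : ℕ) then
        (-(blk M (evenEmb n k) (evenPrev n k) * (blk M (evenPrev n k) (evenPrev n k))⁻¹ *
            blk M (evenPrev n k) (evenEmb n l))) a b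
      else if (l : ℕ) = (k : ℕ) + 1 then
        (-(blk M (evenEmb n k) (evenPrev n l) * (blk M (evenPrev n l) (evenPrev n l))⁻¹ *
            blk M (evenPrev n l) (evenEmb n l))) a b
      else 0 := by
  intro k l a b
  rw [Matrix.sub_apply, ainv_eq m n M htri hodd, collapse m n M k l a b]
  simp only [Matrix.submatrix_apply]
  -- zero lemmas for non-adjacent blocks
  have hzero : ∀ p : Fin ((n + 1) / 2), (p : ℕ) ≠ (k : ℕ) → (p : ℕ) ≠ (k : ℕ) + 1 →
      (blk M (evenEmb n k) (oddEmb n p) * (blk M (oddEmb n p) (oddEmb n p))⁻¹ *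
        blk M (oddEmb n p) (evenEmb n l)) a b = 0 := by
    intro p h1 h2
    have hb : blk M (evenEmb n k) (oddEmb n p) = 0 := by
      ext c d
      simp only [blk, Matrix.of_apply, Matrix.zero_apply]
      exact htri _ _ (by simp only [evenEmb, oddEmb]; omega) c d
    rw [hb, Matrix.zero_mul, Matrix.zero_mul, Matrix.zero_apply]
  have hzeroR : ∀ p : Fin ((n + 1) / 2), (p : ℕ) ≠ (l : ℕ) → (p : ℕ) ≠ (l : ℕ) + 1 →
      (blk M (evenEmb n k) (oddEmb n p) * (blk M (oddEmb n p) (oddEmb n p))⁻¹ *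
        blk M (oddEmb n p) (evenEmb n l)) a b = 0 := by
    intro p h1 h2
    have hb : blk M (oddEmb n p) (evenEmb n l) = 0 := by
      ext c d
      simp only [blk, Matrix.of_apply, Matrix.zero_apply]
      exact htri _ _ (by simp only [evenEmb, oddEmb]; omega) c d
    rw [hb, Matrix.mul_zero, Matrix.zero_apply]
  by_cases hlk : (l : ℕ) = (k : ℕ)
  · rw [if_pos hlk]
    have hl : l = k := Fin.ext hlk
    subst hl
    set pk : Fin ((n + 1) / 2) := ⟨(l : ℕ), by have := l.2; omega⟩ with hpk
    have e1 : evenPrev n l = oddEmb n pk := rfl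
    by_cases h2 : 2 * (l : ℕ) + 2 < n
    · rw [dif_pos h2]
      set pk1 : Fin ((n + 1) / 2) := ⟨(l : ℕ) + 1, by omega⟩ with hpk1
      have e2 : (⟨2 * (l : ℕ) + 2, h2⟩ : Fin n) = oddEmb n pk1 := by
        apply Fin.ext; simp [oddEmb, pk1]; omega
      have hne : pk ≠ pk1 := by
        intro h
        have := congrArg Fin.val h
        simp [pk, pk1] at this
      have hsum : (∑ p : Fin ((n + 1) / 2),
          (blk M (evenEmb n l) (oddEmb n p) * (blk M (oddEmb n p) (oddEmb n p))⁻¹ *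
            blk M (oddEmb n p) (evenEmb n l)) a b) =
          (blk M (evenEmb n l) (oddEmb n pk) * (blk M (oddEmb n pk) (oddEmb n pk))⁻¹ *
            blk M (oddEmb n pk) (evenEmb n l)) a b +
          (blk M (evenEmb n l) (oddEmb n pk1) * (blk M (oddEmb n pk1) (oddEmb n pk1))⁻¹ *
            blk M (oddEmb n pk1) (evenEmb n l)) a b := by
        have hss := Finset.sum_subset (Finset.subset_univ ({pk, pk1} : Finset (Fin ((n + 1) / 2))))
          (fun x _ hx => by
            simp only [Finset.mem_insert, Finset.mem_singleton, not_or] at hx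
            exact hzero x (fun h => hx.1 (Fin.ext h)) (fun h => hx.2 (Fin.ext h)))
        rw [← hss, Finset.sum_pair hne]
      rw [hsum, e1, e2]
      simp only [Matrix.sub_apply]
      have hdiag : blk M (evenEmb n l) (evenEmb n l) a b = M (evenEmb n l, a) (evenEmb n l, b) := rfl
      rw [hdiag]
      ring
    · rw [dif_neg h2]
      have hsum : (∑ p : Fin ((n + 1) / 2),
          (blk M (evenEmb n l) (oddEmb n p) * (blk M (oddEmb n p) (oddEmb n p))⁻¹ *
            blk M (oddEmb n p) (evenEmb n l)) a b) =
          (blk M (evenEmb n l) (oddEmb n pk) * (blk M (oddEmb n pk) (oddEmb n pk))⁻¹ *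
            blk M (oddEmb n pk) (evenEmb n l)) a b := by
        apply Finset.sum_eq_single pk
        · intro p _ hp
          exact hzero p (fun h => hp (Fin.ext h)) (by have := p.2; omega)
        · intro h; exact absurd (Finset.mem_univ pk) h
      rw [hsum, e1]
      simp only [Matrix.sub_apply, Matrix.zero_apply]
      have hdiag : blk M (evenEmb n l) (evenEmb n l) a b = M (evenEmb n l, a) (evenEmb n l, b) := rfl
      rw [hdiag]
      ring
  · rw [if_neg hlk]
    by_cases hlk1 : (l : ℕ) + 1 = (k : ℕ)
    · rw [if_pos hlk1]
      set pk : Fin ((n + 1) / 2) := ⟨(k : ℕ), by have := k.2; omega⟩ with hpk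
      have e1 : evenPrev n k = oddEmb n pk := rfl
      have hsum : (∑ p : Fin ((n + 1) / 2),
          (blk M (evenEmb n k) (oddEmb n p) * (blk M (oddEmb n p) (oddEmb n p))⁻¹ *
            blk M (oddEmb n p) (evenEmb n l)) a b) =
          (blk M (evenEmb n k) (oddEmb n pk) * (blk M (oddEmb n pk) (oddEmb n pk))⁻¹ *
            blk M (oddEmb n pk) (evenEmb n l)) a b := by
        apply Finset.sum_eq_single pk
        · intro p _ hp
          by_cases hp1 : (p : ℕ) = (k : ℕ) + 1
          · exact hzeroR p (by omega) (by omega)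
          · exact hzero p (fun h => hp (Fin.ext h)) hp1
        · intro h; exact absurd (Finset.mem_univ pk) h
      rw [hsum, e1]
      have hD : M (evenEmb n k, a) (evenEmb n l, b) = 0 :=
        htri _ _ (by simp only [evenEmb]; omega) a b
      rw [hD, Matrix.neg_apply]
      ring
    · rw [if_neg hlk1]
      by_cases hlk2 : (l : ℕ) = (k : ℕ) + 1
      · rw [if_pos hlk2]
        set pl : Fin ((n + 1) / 2) := ⟨(l : ℕ), by have := l.2; omega⟩ with hpl
        have hplv : (pl : ℕ) = (l : ℕ) := rfl
        have e1 : evenPrev n l = oddEmb n pl := rfl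
        have hsum : (∑ p : Fin ((n + 1) / 2),
            (blk M (evenEmb n k) (oddEmb n p) * (blk M (oddEmb n p) (oddEmb n p))⁻¹ *
              blk M (oddEmb n p) (evenEmb n l)) a b) =
            (blk M (evenEmb n k) (oddEmb n pl) * (blk M (oddEmb n pl) (oddEmb n pl))⁻¹ *
              blk M (oddEmb n pl) (evenEmb n l)) a b := by
          apply Finset.sum_eq_single pl
          · intro p _ hp
            by_cases hp1 : (p : ℕ) = (k : ℕ)
            · exact hzeroR p (by omega) (by omega)
            · exact hzero p hp1 (fun h => hp (Fin.ext (by omega)))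
          · intro h; exact absurd (Finset.mem_univ pl) h
        rw [hsum, e1]
        have hD : M (evenEmb n k, a) (evenEmb n l, b) = 0 :=
          htri _ _ (by simp only [evenEmb]; omega) a b
        rw [hD, Matrix.neg_apply]
        ring
      · rw [if_neg hlk2]
        have hsum : (∑ p : Fin ((n + 1) / 2),
            (blk M (evenEmb n k) (oddEmb n p) * (blk M (oddEmb n p) (oddEmb n p))⁻¹ *
              blk M (oddEmb n p) (evenEmb n l)) a b) = 0 := by
          apply Finset.sum_eq_zero
          intro p _
          by_cases hp1 : (p : ℕ) = (k : ℕ)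
          · exact hzeroR p (by omega) (by omega)
          · by_cases hp2 : (p : ℕ) = (k : ℕ) + 1
            · exact hzeroR p (by omega) (by omega)
            · exact hzero p hp1 hp2
        rw [hsum]
        have hD : M (evenEmb n k, a) (evenEmb n l, b) = 0 :=
          htri _ _ (by simp only [evenEmb]; omega) a b
        rw [hD]
        ring
end

section
/- Let M be an n×n block-tridiagonal matrix of m×m real blocks with every odd diagonal block A₁, A₃, A₅, … invertible, and assume the Schur complement M₀ := D − C·A⁻¹·B of the odd–even permuted matrix [[A, B], [C, D]] is invertible. Define S⁻¹ as the block diagonal matrix (in the original ordering) with A_i⁻¹ at odd diagonal positions i and the zero block at even positions; define P as the block matrix from even (coarse) block indices to all (fine) block indices whose block in fine row i, coarse column corresponding to even index j is: the identity if i = j; −A_i⁻¹·L_i if i is odd and j = i−1; −A_i⁻¹·U_i if i is odd and j = i+1; and 0 otherwise; and set R := Pᵀ. Then M is invertible and M⁻¹ = S⁻¹ + P·M₀⁻¹·R·(I − M·S⁻¹); in particular one Richardson iteration preconditioned with this two-level method (pre-smoothing with S⁻¹, coarse correction with M₀⁻¹, no post-smoothing) solves M·u = f exactly. -/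
/-!
After the odd–even permutation, `M = [[A, B], [C, D]]`. The odd block indices are pairwise
non-adjacent, so for a block-tridiagonal `M` the block `A` is block diagonal; hence
`S⁻¹ = [[A⁻¹, 0], [0, 0]]` and `P = [[-A⁻¹B], [I]]`. Then `I - M S⁻¹ = [[0, 0], [-CA⁻¹, I]]`,
`M P = [[0], [M₀]]` and `Pᵀ (I - M S⁻¹) = [-CA⁻¹, I]`, so
`M (S⁻¹ + P M₀⁻¹ Pᵀ (I - M S⁻¹)) = [[I, 0], [CA⁻¹, 0]] + [[0, 0], [-CA⁻¹, I]] = I`.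
-/

open Matrix

/-- The smoother `S⁻¹`: block diagonal with `Aᵢ⁻¹` at the odd (1-based) diagonal
positions and zero blocks at the even positions. -/
noncomputable def smootherInv (n m : ℕ)
    (M : Matrix (Fin n × Fin m) (Fin n × Fin m) ℝ) :
    Matrix (Fin n × Fin m) (Fin n × Fin m) ℝ :=
  Matrix.of fun p q =>
    if p.1 = q.1 ∧ (p.1 : ℕ) % 2 = 0 then ((blk M p.1 p.1)⁻¹) p.2 q.2 else 0

/-- The prolongation `P` from the even (coarse) block indices to all (fine) block
indices: the block in fine row `i`, coarse column `j` (even original index) is the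
identity if `i = j`, `-Aᵢ⁻¹·Lᵢ` if `i` is odd and `j = i - 1`, `-Aᵢ⁻¹·Uᵢ` if `i` is
odd and `j = i + 1`, and `0` otherwise (1-based indexing). -/
noncomputable def prol (n m : ℕ)
    (M : Matrix (Fin n × Fin m) (Fin n × Fin m) ℝ) :
    Matrix (Fin n × Fin m) (Fin (n / 2) × Fin m) ℝ :=
  Matrix.of fun p c =>
    if (p.1 : ℕ) = 2 * (c.1 : ℕ) + 1 then (if p.2 = c.2 then 1 else 0)
    else if (p.1 : ℕ) = 2 * (c.1 : ℕ) + 2 then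
      -- row i odd, column j = i - 1 : the block is -Aᵢ⁻¹·Lᵢ
      (-((blk M p.1 p.1)⁻¹ * blk M p.1 (evenEmb n c.1))) p.2 c.2
    else if (p.1 : ℕ) = 2 * (c.1 : ℕ) then
      -- row i odd, column j = i + 1 : the block is -Aᵢ⁻¹·Uᵢ
      (-((blk M p.1 p.1)⁻¹ * blk M p.1 (evenEmb n c.1))) p.2 c.2
    else 0

/-- The coarse operator `M₀ = D - C·A⁻¹·B`, the Schur complement of the odd–even
reordered matrix. -/
noncomputable def coarseOp (n m : ℕ)
    (M : Matrix (Fin n × Fin m) (Fin n × Fin m) ℝ) :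
    Matrix (Fin (n / 2) × Fin m) (Fin (n / 2) × Fin m) ℝ :=
  M.submatrix (fun p : Fin (n / 2) × Fin m => (evenEmb n p.1, p.2))
              (fun p : Fin (n / 2) × Fin m => (evenEmb n p.1, p.2)) -
    M.submatrix (fun p : Fin (n / 2) × Fin m => (evenEmb n p.1, p.2))
                (fun p : Fin ((n + 1) / 2) × Fin m => (oddEmb n p.1, p.2)) *
    (M.submatrix (fun p : Fin ((n + 1) / 2) × Fin m => (oddEmb n p.1, p.2))
                 (fun p : Fin ((n + 1) / 2) × Fin m => (oddEmb n p.1, p.2)))⁻¹ *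
    M.submatrix (fun p : Fin ((n + 1) / 2) × Fin m => (oddEmb n p.1, p.2))
                (fun p : Fin (n / 2) × Fin m => (evenEmb n p.1, p.2))

section BlockAlgebra

variable {R o c : Type*} [Ring R] [Fintype o] [Fintype c] [DecidableEq o] [DecidableEq c]

theorem fromBlocks_mul_twoLevel_eq_one (A Ainv : Matrix o o R) (B : Matrix o c R)
    (C : Matrix c o R) (D G : Matrix c c R) (hA : A * Ainv = 1)
    (hG : (D - C * Ainv * B) * G = 1) :
    fromBlocks A B C D * (fromBlocks Ainv 0 0 0 + fromRows (-(Ainv * B)) 1 * G *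
      (fromRows (-(Ainv * B)) 1)ᵀ * (1 - fromBlocks A B C D * fromBlocks Ainv 0 0 0)) = 1 := by
  have hMS : fromBlocks A B C D * fromBlocks Ainv 0 0 0 = fromBlocks 1 0 (C * Ainv) 0 := by
    simp [fromBlocks_multiply, hA]
  have hMP : fromBlocks A B C D * fromRows (-(Ainv * B)) (1 : Matrix c c R) =
      fromRows 0 (D - C * Ainv * B) := by
    rw [fromBlocks_mul_fromRows]
    simp [← Matrix.mul_assoc, hA, sub_eq_neg_add]
  have hRE : (fromRows (-(Ainv * B)) (1 : Matrix c c R))ᵀ *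
      ((1 : Matrix (o ⊕ c) (o ⊕ c) R) - fromBlocks 1 0 (C * Ainv) 0) =
      fromCols (-(C * Ainv)) (1 : Matrix c c R) := by
    rw [← fromBlocks_one, sub_eq_add_neg, fromBlocks_neg, fromBlocks_add, transpose_fromRows,
      fromCols_mul_fromBlocks]
    simp
  rw [mul_add, hMS, Matrix.mul_assoc _ _ (1 - _), hRE, ← Matrix.mul_assoc, ← Matrix.mul_assoc,
    hMP, fromRows_mul, Matrix.zero_mul, hG, fromRows_mul_fromCols, ← fromBlocks_one,
    fromBlocks_add]
  simp

end BlockAlgebra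

def IsBlockTridiagonal {R : Type*} [Zero R] {n m : ℕ}
    (M : Matrix (Fin n × Fin m) (Fin n × Fin m) R) : Prop :=
  ∀ i j : Fin n, ((i : ℕ) + 1 < (j : ℕ) ∨ (j : ℕ) + 1 < (i : ℕ)) →
    ∀ a b : Fin m, M (i, a) (j, b) = 0

def finOddEvenEquiv (n : ℕ) : Fin ((n + 1) / 2) ⊕ Fin (n / 2) ≃ Fin n where
  toFun := Sum.elim (oddEmb n) (evenEmb n)
  invFun i := if h : (i : ℕ) % 2 = 0 then .inl ⟨i / 2, by omega⟩ else .inr ⟨i / 2, by omega⟩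
  left_inv := by
    rintro (k | k) <;> simp [oddEmb, evenEmb, Fin.ext_iff]; omega
  right_inv i := by
    by_cases h : (i : ℕ) % 2 = 0 <;> simp [h, oddEmb, evenEmb, Fin.ext_iff] <;> omega

def oddEvenEquiv (n m : ℕ) :
    (Fin ((n + 1) / 2) × Fin m) ⊕ (Fin (n / 2) × Fin m) ≃ Fin n × Fin m :=
  (Equiv.sumProdDistrib _ _ _).symm.trans ((finOddEvenEquiv n).prodCongr (Equiv.refl _))

noncomputable def oddBlockDiagInv (n m : ℕ) (M : Matrix (Fin n × Fin m) (Fin n × Fin m) ℝ) :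
    Matrix (Fin ((n + 1) / 2) × Fin m) (Fin ((n + 1) / 2) × Fin m) ℝ :=
  of fun p q => if p.1 = q.1 then (blk M (oddEmb n p.1) (oddEmb n p.1))⁻¹ p.2 q.2 else 0

section OddEven

variable {n m : ℕ} (M : Matrix (Fin n × Fin m) (Fin n × Fin m) ℝ)

theorem submatrix_smootherInv :
    (smootherInv n m M).submatrix (oddEvenEquiv n m) (oddEvenEquiv n m) =
      fromBlocks (oddBlockDiagInv n m M) 0 0 0 := by
  ext (⟨k, a⟩ | ⟨k, a⟩) (⟨l, b⟩ | ⟨l, b⟩) <;>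
    simp [smootherInv, oddBlockDiagInv, oddEvenEquiv, finOddEvenEquiv, oddEmb, evenEmb, Fin.ext_iff]
  omega

theorem oddBlockDiagInv_mul_apply {κ : Type*} (X : Matrix (Fin ((n + 1) / 2) × Fin m) κ ℝ)
    (k : Fin ((n + 1) / 2)) (a : Fin m) (j : κ) :
    (oddBlockDiagInv n m M * X) (k, a) j =
      ∑ x, (blk M (oddEmb n k) (oddEmb n k))⁻¹ a x * X (k, x) j := by
  simp [mul_apply, Fintype.sum_prod_type, oddBlockDiagInv]

variable {M}

theorem IsBlockTridiagonal.blk_eq_zero (htri : IsBlockTridiagonal M) {i j : Fin n}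
    (hij : (i : ℕ) + 1 < (j : ℕ) ∨ (j : ℕ) + 1 < (i : ℕ)) : blk M i j = 0 :=
  ext fun a b => htri i j hij a b

theorem oddBlockDiagInv_mul_toBlocks₁₁ (htri : IsBlockTridiagonal M)
    (hodd : ∀ k : Fin ((n + 1) / 2), IsUnit (blk M (oddEmb n k) (oddEmb n k))) :
    oddBlockDiagInv n m M *
      (M.submatrix (oddEvenEquiv n m) (oddEvenEquiv n m)).toBlocks₁₁ = 1 := by
  ext ⟨k, a⟩ ⟨l, b⟩
  rw [oddBlockDiagInv_mul_apply]
  change ((blk M (oddEmb n k) (oddEmb n k))⁻¹ * blk M (oddEmb n k) (oddEmb n l)) a b = _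
  by_cases hkl : k = l
  · subst hkl
    rw [nonsing_inv_mul _ ((isUnit_iff_isUnit_det _).mp (hodd k))]
    simp [one_apply]
  · have hkl' : (k : ℕ) ≠ l := fun h => hkl (Fin.ext h)
    rw [htri.blk_eq_zero (i := oddEmb n k) (j := oddEmb n l)
      (show 2 * (k : ℕ) + 1 < 2 * l ∨ 2 * (l : ℕ) + 1 < 2 * k by omega)]
    simp [one_apply, hkl]

theorem submatrix_prol (htri : IsBlockTridiagonal M) :
    (prol n m M).submatrix (oddEvenEquiv n m) id =
      fromRows (-(oddBlockDiagInv n m M *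
        (M.submatrix (oddEvenEquiv n m) (oddEvenEquiv n m)).toBlocks₁₂)) 1 := by
  ext (⟨k, a⟩ | ⟨k, a⟩) ⟨c, b⟩
  · rw [fromRows_apply_inl, neg_apply, oddBlockDiagInv_mul_apply]
    change prol n m M (oddEmb n k, a) (c, b) =
      -((blk M (oddEmb n k) (oddEmb n k))⁻¹ * blk M (oddEmb n k) (evenEmb n c)) a b
    have hk : ((oddEmb n k : Fin n) : ℕ) = 2 * k := rfl
    simp only [prol, of_apply, hk]
    rw [if_neg (by omega)]
    split_ifs with h₁ h₂
    · rfl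
    · rfl
    · rw [htri.blk_eq_zero (i := oddEmb n k) (j := evenEmb n c)
        (show 2 * (k : ℕ) + 1 < 2 * c + 1 ∨ 2 * (c : ℕ) + 1 + 1 < 2 * k by omega)]
      simp
  · change prol n m M (evenEmb n k, a) (c, b) = (1 : Matrix _ _ ℝ) (k, a) (c, b)
    have hk : ((evenEmb n k : Fin n) : ℕ) = 2 * k + 1 := rfl
    simp only [prol, of_apply, hk, one_apply, Prod.ext_iff, Fin.ext_iff]
    split_ifs <;> first | rfl | omega

end OddEven
/-- **Two-level direct solver (cyclic reduction as multigrid).**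
For a block-tridiagonal `M` with invertible odd diagonal blocks and invertible Schur
complement `M₀ = D - C·A⁻¹·B` of the odd–even reordered matrix, with the smoother
`S⁻¹`, prolongation `P` and restriction `R = Pᵀ` defined above, `M` is invertible and
`M⁻¹ = S⁻¹ + P·M₀⁻¹·R·(I - M·S⁻¹)`; in particular one Richardson iteration
preconditioned with this two-level method (pre-smoothing with `S⁻¹`, coarse correction
with `M₀⁻¹`, no post-smoothing) solves `M·u = f` exactly. -/
theorem two_level_cyclic_reduction_direct_solver (m n : ℕ)
    (M : Matrix (Fin n × Fin m) (Fin n × Fin m) ℝ)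
    (htri : ∀ i j : Fin n, ((i : ℕ) + 1 < (j : ℕ) ∨ (j : ℕ) + 1 < (i : ℕ)) →
      ∀ a b : Fin m, M (i, a) (j, b) = 0)
    (hodd : ∀ k : Fin ((n + 1) / 2), IsUnit (blk M (oddEmb n k) (oddEmb n k)))
    (hM₀ : IsUnit (coarseOp n m M)) :
    IsUnit M ∧
    M⁻¹ = smootherInv n m M +
      prol n m M * (coarseOp n m M)⁻¹ * (prol n m M)ᵀ *
        ((1 : Matrix (Fin n × Fin m) (Fin n × Fin m) ℝ) - M * smootherInv n m M) ∧
    ∀ f : Fin n × Fin m → ℝ,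
      M *ᵥ (smootherInv n m M *ᵥ f +
        prol n m M *ᵥ ((coarseOp n m M)⁻¹ *ᵥ ((prol n m M)ᵀ *ᵥ
          (f - M *ᵥ (smootherInv n m M *ᵥ f))))) = f := by
  set e := oddEvenEquiv n m
  have hA : (M.submatrix e e).toBlocks₁₁ * oddBlockDiagInv n m M = 1 :=
    mul_eq_one_comm.mp (oddBlockDiagInv_mul_toBlocks₁₁ htri hodd)
  have hG : ((M.submatrix e e).toBlocks₂₂ - (M.submatrix e e).toBlocks₂₁ *
      oddBlockDiagInv n m M * (M.submatrix e e).toBlocks₁₂) * (coarseOp n m M)⁻¹ = 1 := by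
    -- `coarseOp n m M` is by definition this Schur complement, with `A⁻¹` for `oddBlockDiagInv`
    rw [← inv_eq_right_inv hA]
    exact mul_nonsing_inv _ ((isUnit_iff_isUnit_det _).mp hM₀)
  have key : M * (smootherInv n m M + prol n m M * (coarseOp n m M)⁻¹ * (prol n m M)ᵀ *
      (1 - M * smootherInv n m M)) = 1 := by
    apply (reindexAlgEquiv ℝ ℝ e.symm).injective
    have := fromBlocks_mul_twoLevel_eq_one _ _ _ _ _ _ hA hG
    rw [fromBlocks_toBlocks] at this
    simpa only [map_mul, map_add, map_sub, map_one, coe_reindexAlgEquiv, reindex_apply,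
      Equiv.symm_symm, e, submatrix_mul _ _ _ id _ Function.bijective_id, submatrix_id_id,
      ← transpose_submatrix, submatrix_smootherInv, submatrix_prol htri] using this
  refine ⟨IsUnit.of_mul_eq_one _ key, inv_eq_right_inv key, fun f => ?_⟩
  simpa only [← mulVec_mulVec, add_mulVec, sub_mulVec, one_mulVec] using congrArg (· *ᵥ f) key
end

section
/- Let M = [[A, B], [C, D]] be a real block matrix with A invertible and M₀ := D − C·A⁻¹·B invertible, and define S⁻¹ := [[A⁻¹, 0], [0, 0]], P := col(−A⁻¹B; I), R := Pᵀ. Then the error propagation operator of the two-level method without post-smoothing vanishes: (I − P·M₀⁻¹·R·M)·(I − S⁻¹·M) = 0, i.e., the two-level preconditioned Richardson iteration is a direct solver. -/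
open Matrix

/-!
The smoother `S⁻¹ = [[A⁻¹, 0], [0, 0]]` solves exactly on the first block, so its error operator
`I - S⁻¹M = [[0, -A⁻¹B], [0, I]]` factors as `P · [0 | I]`: every error left by the smoother lies in
the range of the prolongation `P`. Since `M P = col(0; M₀)`, the Galerkin coarse operator is
`Pᵀ M P = M₀`, and the coarse-grid correction `I - P M₀⁻¹ Pᵀ M` annihilates the range of `P`.
-/

theorem coarse_correction_mul_prolongation_eq_zero {l m α : Type*} [Fintype l] [Fintype m]
    [DecidableEq l] [DecidableEq m] [CommRing α] (P : Matrix l m α) (R : Matrix m l α)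
    (M : Matrix l l α) (hM₀ : IsUnit (R * M * P).det) :
    (1 - P * (R * M * P)⁻¹ * R * M) * P = 0 := by
  have hreassoc : P * (R * M * P)⁻¹ * R * M * P = P * ((R * M * P)⁻¹ * (R * M * P)) := by
    simp only [Matrix.mul_assoc]
  rw [Matrix.sub_mul, Matrix.one_mul, hreassoc, nonsing_inv_mul _ hM₀, Matrix.mul_one, sub_self]

theorem transpose_fromRows_one_mul_fromRows_zero {l m n α : Type*} [Fintype m] [Fintype n]
    [DecidableEq n] [Semiring α] (X : Matrix m n α) (Y : Matrix n l α) :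
    (fromRows X (1 : Matrix n n α))ᵀ * fromRows (0 : Matrix m l α) Y = Y := by
  rw [transpose_fromRows, fromCols_mul_fromRows, Matrix.mul_zero, zero_add, transpose_one,
    Matrix.one_mul]

section

variable {m n α : Type*} [Fintype m] [Fintype n] [DecidableEq m] [DecidableEq n] [CommRing α]

theorem fromBlocks_mul_fromRows_neg_inv_mul_one (A : Matrix m m α) (B : Matrix m n α)
    (C : Matrix n m α) (D : Matrix n n α) (hA : IsUnit A.det) :
    fromBlocks A B C D * fromRows (-(A⁻¹ * B)) (1 : Matrix n n α) =
      fromRows (0 : Matrix m n α) (D - C * A⁻¹ * B) := by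
  rw [fromBlocks_mul_fromRows, Matrix.mul_neg, ← Matrix.mul_assoc, mul_nonsing_inv _ hA,
    Matrix.one_mul, Matrix.mul_neg, Matrix.mul_one, Matrix.mul_one, Matrix.mul_assoc,
    neg_add_cancel, neg_add_eq_sub]

theorem galerkin_fromBlocks_eq_schur (A : Matrix m m α) (B : Matrix m n α)
    (C : Matrix n m α) (D : Matrix n n α) (hA : IsUnit A.det) :
    (fromRows (-(A⁻¹ * B)) (1 : Matrix n n α))ᵀ * fromBlocks A B C D *
        fromRows (-(A⁻¹ * B)) (1 : Matrix n n α) = D - C * A⁻¹ * B := by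
  rw [Matrix.mul_assoc, fromBlocks_mul_fromRows_neg_inv_mul_one A B C D hA,
    transpose_fromRows_one_mul_fromRows_zero]

theorem one_sub_blockDiagInv_mul_fromBlocks (A : Matrix m m α) (B : Matrix m n α)
    (C : Matrix n m α) (D : Matrix n n α) (hA : IsUnit A.det) :
    1 - fromBlocks A⁻¹ 0 0 0 * fromBlocks A B C D =
      fromRows (-(A⁻¹ * B)) (1 : Matrix n n α) * fromCols (0 : Matrix n m α) 1 := by
  rw [fromRows_mul_fromCols, fromBlocks_multiply, ← fromBlocks_one, sub_eq_add_neg,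
    fromBlocks_neg, fromBlocks_add, nonsing_inv_mul _ hA]
  simp only [Matrix.zero_mul, Matrix.mul_zero, Matrix.mul_one, add_zero, neg_zero, add_neg_cancel,
    zero_add]

end

/-- **The two-level method without post-smoothing is a direct solver:**
its error propagation operator `(I - P·M₀⁻¹·R·M)·(I - S⁻¹·M)` vanishes, where
`S⁻¹ = [[A⁻¹,0],[0,0]]`, `P = col(-A⁻¹B; I)`, `R = Pᵀ`, `M₀ = D - C·A⁻¹·B`. -/
theorem two_level_error_propagation_vanishes {n₁ n₂ : ℕ}
    (A : Matrix (Fin n₁) (Fin n₁) ℝ) (B : Matrix (Fin n₁) (Fin n₂) ℝ)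
    (C : Matrix (Fin n₂) (Fin n₁) ℝ) (D : Matrix (Fin n₂) (Fin n₂) ℝ)
    (hA : IsUnit A) (hM₀ : IsUnit (D - C * A⁻¹ * B)) :
    ((1 : Matrix (Fin n₁ ⊕ Fin n₂) (Fin n₁ ⊕ Fin n₂) ℝ) -
        Matrix.fromRows (-(A⁻¹ * B)) (1 : Matrix (Fin n₂) (Fin n₂) ℝ) *
          (D - C * A⁻¹ * B)⁻¹ *
          (Matrix.fromRows (-(A⁻¹ * B)) (1 : Matrix (Fin n₂) (Fin n₂) ℝ))ᵀ *
          Matrix.fromBlocks A B C D) *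
      ((1 : Matrix (Fin n₁ ⊕ Fin n₂) (Fin n₁ ⊕ Fin n₂) ℝ) -
        Matrix.fromBlocks A⁻¹ 0 0 0 * Matrix.fromBlocks A B C D) = 0 := by
  have hA' : IsUnit A.det := (isUnit_iff_isUnit_det A).mp hA
  have hgalerkin := galerkin_fromBlocks_eq_schur A B C D hA'
  have hcorrection := coarse_correction_mul_prolongation_eq_zero
    (fromRows (-(A⁻¹ * B)) (1 : Matrix (Fin n₂) (Fin n₂) ℝ))
    (fromRows (-(A⁻¹ * B)) (1 : Matrix (Fin n₂) (Fin n₂) ℝ))ᵀ (fromBlocks A B C D)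
    (by rw [hgalerkin]; exact (isUnit_iff_isUnit_det _).mp hM₀)
  rw [hgalerkin] at hcorrection
  rw [one_sub_blockDiagInv_mul_fromBlocks A B C D hA', ← Matrix.mul_assoc, hcorrection,
    Matrix.zero_mul]
end
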